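/- Let q be a self-join-free Boolean conjunctive query, db a database instance, and V a nonempty subset of vars(q) such that no variable of V is attacked in q. Then there exists a repair r of db such that rifi(q,r,V) equals the intersection of rifi(q,s,V) over all repairs s of db. -/

import Mathlib

open scoped Classical

/-! ## Variables, constants, relation names -/

abbrev Var : Type := ℕ
abbrev RelName : Type := ℕ

/-- A term: a variable or a constant (a non-negative rational). -/
inductive Trm : Type where
  | var : Var → Trm
  | const : ℚ≥0 → Trm
deriving DecidableEq

/-- An atom `R(x̲, y)`: relation name, primary-key arguments, remaining arguments. -/
structure DBAtom : Type where
  rel : RelName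
  keyArgs : List Trm
  nonkeyArgs : List Trm
deriving DecidableEq, Inhabited

/-- A fact: an atom without variables. -/
structure DBFact : Type where
  rel : RelName
  keyArgs : List ℚ≥0
  nonkeyArgs : List ℚ≥0
deriving DecidableEq

def Trm.var? : Trm → Option Var
  | .var v => some v
  | .const _ => none

def Trm.const? : Trm → Option ℚ≥0
  | .var _ => none
  | .const c => some c

def DBAtom.keyVars (F : DBAtom) : Finset Var := (F.keyArgs.filterMap Trm.var?).toFinset

def DBAtom.allVars (F : DBAtom) : Finset Var :=
  ((F.keyArgs ++ F.nonkeyArgs).filterMap Trm.var?).toFinset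

def DBAtom.notkeyVars (F : DBAtom) : Finset Var := F.allVars \ F.keyVars

def qVars (q : List DBAtom) : Finset Var := q.foldr (fun F s => F.allVars ∪ s) ∅

/-- Self-join-free: pairwise distinct relation names. -/
def SelfJoinFree (q : List DBAtom) : Prop := (q.map DBAtom.rel).Nodup

def KeyEqual (f g : DBFact) : Prop := f.rel = g.rel ∧ f.keyArgs = g.keyArgs

def DBConsistent (s : Finset DBFact) : Prop :=
  ∀ f ∈ s, ∀ g ∈ s, KeyEqual f g → f = g

/-- A repair: an inclusion-maximal consistent subset. -/
def IsRepair (db r : Finset DBFact) : Prop :=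
  r ⊆ db ∧ DBConsistent r ∧
    ∀ s : Finset DBFact, r ⊆ s → s ⊆ db → DBConsistent s → s = r

/-! ## Valuations (partial maps from variables to constants) -/

abbrev Assignment : Type := Var → Option ℚ≥0

def Assignment.Dom (θ : Assignment) : Set Var := {v | θ v ≠ none}

def Assignment.ExtendsA (μ θ : Assignment) : Prop :=
  ∀ (v : Var) (c : ℚ≥0), θ v = some c → μ v = some c

noncomputable def Assignment.restrict (θ : Assignment) (S : Set Var) : Assignment :=
  fun v => if v ∈ S then θ v else none

def emptyAssignment : Assignment := fun _ => none

/-- Combination of two valuations (the first takes precedence). -/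
def Assignment.comb (θ μ : Assignment) : Assignment :=
  fun v => (θ v).orElse (fun _ => μ v)

def applyTrm (θ : Assignment) : Trm → Trm
  | .var v => (θ v).elim (Trm.var v) Trm.const
  | .const c => .const c

def applyAtom (θ : Assignment) (F : DBAtom) : DBAtom :=
  ⟨F.rel, F.keyArgs.map (applyTrm θ), F.nonkeyArgs.map (applyTrm θ)⟩

def applyQ (θ : Assignment) (q : List DBAtom) : List DBAtom := q.map (applyAtom θ)

def DBAtom.toFact? (F : DBAtom) : Option DBFact := do
  let ks ← F.keyArgs.mapM Trm.const?
  let ns ← F.nonkeyArgs.mapM Trm.const?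
  pure (DBFact.mk F.rel ks ns)

def AtomIn (s : Finset DBFact) (F : DBAtom) : Prop := ∃ f ∈ s, F.toFact? = some f

/-- `(s, θ) ⊨ q`: θ extends to a valuation over dom(θ) ∪ vars(q) mapping all atoms of q into s. -/
def Entails (s : Finset DBFact) (θ : Assignment) (q : List DBAtom) : Prop :=
  ∃ μ : Assignment, μ.Dom = θ.Dom ∪ ↑(qVars q) ∧ μ.ExtendsA θ ∧
    ∀ F ∈ q, AtomIn s (applyAtom μ F)

/-! ## Functional dependencies -/

def FDSatT (N : Set (Var → ℚ≥0)) (X Y : Finset Var) : Prop :=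
  ∀ t₁ ∈ N, ∀ t₂ ∈ N, (∀ x ∈ X, t₁ x = t₂ x) → ∀ y ∈ Y, t₁ y = t₂ y

/-- Standard logical implication of functional dependencies. -/
def FDImp (fds : Set (Finset Var × Finset Var)) (X Y : Finset Var) : Prop :=
  ∀ N : Set (Var → ℚ≥0), (∀ fd ∈ fds, FDSatT N fd.1 fd.2) → FDSatT N X Y

def FDSet (q : List DBAtom) : Set (Finset Var × Finset Var) :=
  {p | ∃ F ∈ q, p = (F.keyVars, F.allVars)}

def keycl (F : DBAtom) (q : List DBAtom) : Set Var :=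
  {x | x ∈ qVars q ∧ FDImp (FDSet (q.erase F)) F.keyVars {x}}

/-! ## Attacks and the attack graph -/

def AdjIn (q : List DBAtom) (a b : Var) : Prop :=
  ∃ G ∈ q, a ∈ G.allVars ∧ b ∈ G.allVars

/-- Atom F attacks variable x in q. -/
def AttacksVar (q : List DBAtom) (F : DBAtom) (x : Var) : Prop :=
  ∃ l : List Var, (∀ v ∈ l, v ∉ keycl F q) ∧
    (∃ h, l.head? = some h ∧ h ∈ F.notkeyVars) ∧
    l.getLast? = some x ∧ l.Chain' (AdjIn q)

def AttacksAtom (q : List DBAtom) (F G : DBAtom) : Prop :=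
  ∃ x ∈ G.allVars, AttacksVar q F x

def Unattacked (q : List DBAtom) (v : Var) : Prop := ∀ F ∈ q, ¬ AttacksVar q F v

/-- The list order of q is a topological sort of its (hence acyclic) attack graph. -/
def IsTopoSort (q : List DBAtom) : Prop :=
  ∀ i j : Fin q.length, q.get i ≠ q.get j →
    AttacksAtom q (q.get i) (q.get j) → (i : ℕ) < (j : ℕ)

/-! ## Embeddings and ∀embeddings (relative to the list order as topological sort) -/

def uVars (q : List DBAtom) (ℓ : ℕ) : Finset Var := qVars (q.take ℓ)

def headKey : List DBAtom → Finset Var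
  | [] => ∅
  | F :: _ => F.keyVars

/-- ℓ-embedding of q in db. -/
def IsLEmb (q : List DBAtom) (db : Finset DBFact) (ℓ : ℕ) (θ : Assignment) : Prop :=
  θ.Dom = ↑(uVars q ℓ) ∧ Entails db θ q

/-- ℓ-∀embedding of q in db. -/
def IsForallEmb (q : List DBAtom) (db : Finset DBFact) : ℕ → Assignment → Prop
  | 0, θ => IsLEmb q db 0 θ ∧ ∀ r, IsRepair db r → Entails r emptyAssignment q
  | (ℓ + 1), θ =>
      IsLEmb q db (ℓ + 1) θ ∧
      (∀ r, IsRepair db r →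
        Entails r (θ.restrict (↑(uVars q ℓ) ∪ ↑(headKey (q.drop ℓ)))) (q.drop ℓ)) ∧
      IsForallEmb q db ℓ (θ.restrict ↑(uVars q ℓ))

/-- An embedding of q in s: a valuation over vars(q) mapping all atoms of q into s. -/
def IsEmbedding (q : List DBAtom) (s : Finset DBFact) (θ : Assignment) : Prop :=
  θ.Dom = ↑(qVars q) ∧ ∀ F ∈ q, AtomIn s (applyAtom θ F)

/-- Superfrugal repair: every embedding of q in r is a ∀embedding of q in db. -/
def Superfrugal (q : List DBAtom) (db r : Finset DBFact) : Prop :=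
  IsRepair db r ∧ ∀ θ, IsEmbedding q r θ → IsForallEmb q db q.length θ

/-! ## FD satisfaction by sets of valuations; maximal consistent subsets (MCS) -/

def AgreeOn (θ₁ θ₂ : Assignment) (X : Finset Var) : Prop := ∀ x ∈ X, θ₁ x = θ₂ x

def SatFD (N : Set Assignment) (X Y : Finset Var) : Prop :=
  ∀ θ₁ ∈ N, ∀ θ₂ ∈ N, AgreeOn θ₁ θ₂ X → AgreeOn θ₁ θ₂ Y

def SatFDs (N : Set Assignment) (q : List DBAtom) : Prop :=
  ∀ fd ∈ FDSet q, SatFD N fd.1 fd.2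

/-- Maximal consistent subset of a set M of embeddings. -/
def IsMCS (q : List DBAtom) (M N : Set Assignment) : Prop :=
  N ⊆ M ∧ SatFDs N q ∧ ∀ N', N ⊆ N' → N' ⊆ M → SatFDs N' q → N' = N

/-! ## Aggregate operators -/

structure AggOp : Type where
  app : Multiset ℚ≥0 → ℚ
  nonneg : ∀ X : Multiset ℚ≥0, X ≠ 0 → 0 ≤ app X

noncomputable def AggOp.appNN (A : AggOp) (X : Multiset ℚ≥0) : ℚ≥0 := (A.app X).toNNRat

def AggOp.Assoc (A : AggOp) : Prop :=
  ∀ X Y : Multiset ℚ≥0, X ≠ 0 → A.app (X + Y) = A.app (A.appNN X ::ₘ Y)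

def AggOp.Mono (A : AggOp) : Prop :=
  ∀ x x' : List ℚ≥0, x ≠ [] → List.Forall₂ (· ≤ ·) x x' →
    ∀ Y : Multiset ℚ≥0, A.app ↑x ≤ A.app (↑x' + Y)

def evalTrm (θ : Assignment) : Trm → ℚ≥0
  | .var v => (θ v).getD 0
  | .const c => c

/-- The multiset of r-values over a (finite) set of valuations. -/
noncomputable def valsOf (N : Set Assignment) (r : Trm) : Multiset ℚ≥0 :=
  if h : N.Finite then h.toFinset.val.map (fun θ => evalTrm θ r) else 0

/-- Primitive numerical term: a (numerical) variable of the query, or a constant. -/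
def PrimTerm (q : List DBAtom) (r : Trm) : Prop :=
  (∃ v, r = Trm.var v ∧ v ∈ qVars q) ∨ (∃ c, r = Trm.const c)

/-! ## Branches and ∀key-embeddings -/

/-- γ is a branch of the ℓ-∀embedding θ. -/
def IsBranch (q : List DBAtom) (db : Finset DBFact) (ℓ : ℕ) (θ γ : Assignment) : Prop :=
  γ.ExtendsA θ ∧
  (∀ v ∈ γ.Dom \ θ.Dom, Unattacked (applyQ θ (q.drop ℓ)) v) ∧
  (∃ μ, IsForallEmb q db q.length μ ∧ μ.ExtendsA γ)

/-- γ is an (ℓ+1)-∀key-embedding: a branch of θ with domain dom(θ) ∪ key(F_{ℓ+1}). -/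
def IsKeyEmb (q : List DBAtom) (db : Finset DBFact) (ℓ : ℕ) (θ γ : Assignment) : Prop :=
  IsBranch q db ℓ θ γ ∧ γ.Dom = θ.Dom ∪ ↑(headKey (q.drop ℓ))

/-- M(θ): all ∀embeddings of q in db extending θ. -/
def Mset (q : List DBAtom) (db : Finset DBFact) (θ : Assignment) : Set Assignment :=
  {μ | IsForallEmb q db q.length μ ∧ μ.ExtendsA θ}

/-! ## Weakly connected components of the attack graph -/

def UndirectedEdge (p : List DBAtom) (F G : DBAtom) : Prop :=
  F ∈ p ∧ G ∈ p ∧ (AttacksAtom p F G ∨ AttacksAtom p G F)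

/-- S is a maximal weakly connected component of the attack graph of p. -/
def IsWCC (p : List DBAtom) (S : Set DBAtom) : Prop :=
  ∃ F₀ ∈ p, S = {G | Relation.ReflTransGen (UndirectedEdge p) F₀ G}

/-! ## rifi, sequential proofs, n-minimality -/

/-- rifi(q, s, V): valuations over V extending to a valuation over vars(q) mapping q into s. -/
def rifi (q : List DBAtom) (s : Finset DBFact) (V : Finset Var) : Set Assignment :=
  {θ | θ.Dom = ↑V ∧ ∃ μ : Assignment, μ.Dom = ↑(qVars q) ∧ μ.ExtendsA θ ∧
      ∀ F ∈ q, AtomIn s (applyAtom μ F)}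

/-- A sequential proof of FD(p) ⊨ Z → w. -/
def IsSeqProof (p : List DBAtom) (Z : Finset Var) (w : Var) (l : List DBAtom) : Prop :=
  (∀ F ∈ l, F ∈ p) ∧
  (∀ i : Fin l.length, (l.get i).keyVars ⊆ Z ∪ qVars (l.take i.1)) ∧
  w ∈ Z ∪ qVars l

/-- n-minimal repair (with X = vars(q)). -/
def NMinimal (q : List DBAtom) (db r : Finset DBFact) : Prop :=
  IsRepair db r ∧
  ¬ ∃ s : Finset DBFact, IsRepair db s ∧
      (∀ θ, IsEmbedding q s θ → IsEmbedding q r θ) ∧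
      (∃ μ, IsEmbedding q r μ ∧ ¬ IsEmbedding q s μ)

/-! ## Descending chains for aggregate operators -/

def DescChain {α β : Type*} [LT β] (F : Multiset α → β) (s t : α) : Prop :=
  ∀ i : ℕ, F (s ::ₘ Multiset.replicate (i + 1) t) < F (s ::ₘ Multiset.replicate i t)

def BoundedBy {α β : Type*} [LT β] (F : Multiset α → β) (s t : α) (m : ℕ → α) : Prop :=
  ∀ i j : ℕ, 1 ≤ j → ∀ k' k : ℕ, k' ≤ k → k ≤ i →
    F (s ::ₘ Multiset.replicate k' t) <
      F (Multiset.replicate j (m i) + (s ::ₘ Multiset.replicate k t))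

def HasBoundedDescChain {α β : Type*} [LT β] (F : Multiset α → β) : Prop :=
  ∃ s t, DescChain F s t ∧ ∃ m : ℕ → α, BoundedBy F s t m

/-!
Choose a repair `r` whose `rifi` is inclusion-minimal among all repairs; it suffices to show
`rifi q r V ⊆ rifi q s V` for every repair `s`. If some fact `f ∈ r \ s` is the image of an
atom `F` under an embedding `μ` of `q` in `r`, swap it for its key-equal fact `g ∈ s`. An
embedding `ν` of `q` in the new repair that uses `g` glues with `μ` into an embedding in `r`
that differs from `ν` only on variables attacked by `F`, hence not on `V`. So the swap does not
enlarge `rifi`, by minimality leaves it unchanged, and brings the repair closer to `s`. Once no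
such fact is left, every embedding in `r` is one in `s`.
-/

def DBFact.toAtom (f : DBFact) : DBAtom := ⟨f.rel, f.keyArgs.map .const, f.nonkeyArgs.map .const⟩

lemma Trm.mapM_const?_eq_some_iff {l : List Trm} {cs : List ℚ≥0} :
    l.mapM Trm.const? = some cs ↔ l = cs.map .const := by
  induction l generalizing cs with
  | nil => rw [List.mapM_nil]; cases cs <;> simp
  | cons a l ih =>
    cases a <;> cases cs <;> simp [Trm.const?, Option.bind_eq_some_iff, ih, and_comm]

lemma Trm.mapM_const?_map_const (cs : List ℚ≥0) : (cs.map .const).mapM Trm.const? = some cs :=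
  Trm.mapM_const?_eq_some_iff.mpr rfl

lemma DBAtom.toFact?_eq_some_iff {A : DBAtom} {f : DBFact} :
    A.toFact? = some f ↔ A = f.toAtom := by
  constructor
  · intro h
    simp only [DBAtom.toFact?, Option.bind_eq_bind, Option.bind_eq_some_iff,
      Trm.mapM_const?_eq_some_iff, Option.pure_def, Option.some.injEq] at h
    obtain ⟨ks, hks, ns, hns, rfl⟩ := h
    simp [DBFact.toAtom, ← hks, ← hns]
  · rintro rfl
    simp only [DBAtom.toFact?, DBFact.toAtom, Trm.mapM_const?_map_const]
    rfl

section Valuations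

variable {μ ν θ : Assignment}

lemma applyTrm_var_eq_const {v : Var} {c : ℚ≥0} :
    applyTrm θ (.var v) = .const c ↔ θ v = some c := by
  cases h : θ v <;> simp [applyTrm, h]

lemma map_applyTrm_congr {l : List Trm} (h : ∀ v, .var v ∈ l → μ v = ν v) :
    l.map (applyTrm μ) = l.map (applyTrm ν) := by
  refine List.map_inj_left.mpr ?_
  rintro (v | c) hv
  · simp [applyTrm, h v hv]
  · rfl

lemma eq_of_map_applyTrm_eq_map_const {l : List Trm} {cs : List ℚ≥0}
    (hμ : l.map (applyTrm μ) = cs.map .const) (hν : l.map (applyTrm ν) = cs.map .const)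
    {v : Var} (hv : .var v ∈ l) : μ v = ν v := by
  have hmem : applyTrm μ (.var v) ∈ cs.map .const := hμ ▸ List.mem_map_of_mem hv
  obtain ⟨c, -, hc⟩ := List.mem_map.mp hmem
  have hμν : applyTrm μ (.var v) = applyTrm ν (.var v) :=
    List.map_inj_left.mp (hμ.trans hν.symm) _ hv
  have hμc : μ v = some c := applyTrm_var_eq_const.mp hc.symm
  have hνc : ν v = some c := applyTrm_var_eq_const.mp (hμν ▸ hc.symm)
  rw [hμc, hνc]

lemma Trm.var?_eq_some_iff {a : Trm} {v : Var} : a.var? = some v ↔ a = .var v := by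
  cases a <;> simp [Trm.var?]

lemma DBAtom.mem_keyVars {G : DBAtom} {v : Var} : v ∈ G.keyVars ↔ .var v ∈ G.keyArgs := by
  simp [DBAtom.keyVars, Trm.var?_eq_some_iff]

lemma DBAtom.mem_allVars {G : DBAtom} {v : Var} :
    v ∈ G.allVars ↔ .var v ∈ G.keyArgs ∨ .var v ∈ G.nonkeyArgs := by
  simp [DBAtom.allVars, Trm.var?_eq_some_iff]

lemma DBAtom.keyVars_subset_allVars (G : DBAtom) : G.keyVars ⊆ G.allVars :=
  fun _ hv => DBAtom.mem_allVars.mpr (.inl (DBAtom.mem_keyVars.mp hv))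

lemma allVars_subset_qVars {q : List DBAtom} {G : DBAtom} (hG : G ∈ q) :
    G.allVars ⊆ qVars q := by
  induction q with
  | nil => simp at hG
  | cons F q ih =>
    rcases List.mem_cons.mp hG with rfl | hG
    · exact Finset.subset_union_left
    · exact (ih hG).trans Finset.subset_union_right

lemma applyAtom_congr {G : DBAtom} (h : ∀ v ∈ G.allVars, μ v = ν v) :
    applyAtom μ G = applyAtom ν G := by
  simp only [applyAtom, DBAtom.mk.injEq, true_and]
  exact ⟨map_applyTrm_congr fun v hv => h v (DBAtom.mem_allVars.mpr (.inl hv)),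
    map_applyTrm_congr fun v hv => h v (DBAtom.mem_allVars.mpr (.inr hv))⟩

lemma eqOn_allVars_of_applyAtom_eq_toAtom {G : DBAtom} {f : DBFact}
    (hμ : applyAtom μ G = f.toAtom) (hν : applyAtom ν G = f.toAtom) :
    ∀ v ∈ G.allVars, μ v = ν v := by
  simp only [applyAtom, DBFact.toAtom, DBAtom.mk.injEq] at hμ hν
  intro v hv
  rcases DBAtom.mem_allVars.mp hv with hv | hv
  · exact eq_of_map_applyTrm_eq_map_const hμ.2.1 hν.2.1 hv
  · exact eq_of_map_applyTrm_eq_map_const hμ.2.2 hν.2.2 hv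

lemma eqOn_keyVars_of_keyEqual {F : DBAtom} {f g : DBFact}
    (hμ : applyAtom μ F = f.toAtom) (hν : applyAtom ν F = g.toAtom) (hfg : KeyEqual f g) :
    ∀ v ∈ F.keyVars, μ v = ν v := fun _ hv =>
  eq_of_map_applyTrm_eq_map_const (congrArg DBAtom.keyArgs hμ)
    (hfg.2 ▸ congrArg DBAtom.keyArgs hν) (DBAtom.mem_keyVars.mp hv)

lemma DBConsistent.eqOn_allVars {r : Finset DBFact} (hr : DBConsistent r) {G : DBAtom}
    (hμ : AtomIn r (applyAtom μ G)) (hν : AtomIn r (applyAtom ν G))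
    (hkey : ∀ v ∈ G.keyVars, μ v = ν v) : ∀ v ∈ G.allVars, μ v = ν v := by
  obtain ⟨f, hf, hμf⟩ := hμ
  obtain ⟨g, hg, hνg⟩ := hν
  rw [DBAtom.toFact?_eq_some_iff] at hμf hνg
  have hμk : G.keyArgs.map (applyTrm μ) = f.keyArgs.map .const := congrArg DBAtom.keyArgs hμf
  have hνk : G.keyArgs.map (applyTrm ν) = g.keyArgs.map .const := congrArg DBAtom.keyArgs hνg
  have hkeyArgs : f.keyArgs.map Trm.const = g.keyArgs.map Trm.const := by
    rw [← hμk, ← hνk]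
    exact map_applyTrm_congr fun v hv => hkey v (DBAtom.mem_keyVars.mpr hv)
  have hfg : f = g := hr f hf g hg
    ⟨(congrArg DBAtom.rel hμf).symm.trans (congrArg DBAtom.rel hνg),
      List.map_injective_iff.mpr (fun _ _ => Trm.const.inj) hkeyArgs⟩
  subst hfg
  exact eqOn_allVars_of_applyAtom_eq_toAtom hμf hνg

end Valuations

lemma fdSatT_pair {t₁ t₂ : Var → ℚ≥0} {X Y : Finset Var}
    (h : (∀ x ∈ X, t₁ x = t₂ x) → ∀ y ∈ Y, t₁ y = t₂ y) : FDSatT {t₁, t₂} X Y := by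
  intro s₁ hs₁ s₂ hs₂ hX y hy
  rcases hs₁ with rfl | rfl <;> rcases hs₂ with rfl | rfl
  · rfl
  · exact h hX y hy
  · exact (h (fun x hx => (hX x hx).symm) y hy).symm
  · rfl

section Attacks

variable {q : List DBAtom} {F : DBAtom}

/-- The pair `{μ, ν}`, encoded injectively as total maps, satisfies `FD(q \ {F})`. -/
lemma DBConsistent.eqOn_keycl {r : Finset DBFact} (hr : DBConsistent r) {μ ν : Assignment}
    (hμ : ∀ G ∈ q.erase F, AtomIn r (applyAtom μ G))
    (hν : ∀ G ∈ q.erase F, AtomIn r (applyAtom ν G))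
    (hkey : ∀ v ∈ F.keyVars, μ v = ν v) : ∀ x ∈ keycl F q, μ x = ν x := by
  rintro x ⟨-, hx⟩
  let e : Option ℚ≥0 → ℚ≥0 := fun o => o.elim 0 (· + 1)
  have he : Function.Injective e := by
    rintro (_ | a) (_ | b) h <;> simp [e] at h ⊢
    · exact (by positivity : (0 : ℚ≥0) < b + 1).ne h
    · exact h
  have hsat : ∀ fd ∈ FDSet (q.erase F), FDSatT {e ∘ μ, e ∘ ν} fd.1 fd.2 := by
    rintro _ ⟨G, hG, rfl⟩
    refine fdSatT_pair fun hk y hy => congrArg e ?_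
    exact hr.eqOn_allVars (hμ G hG) (hν G hG) (fun v hv => he (hk v hv)) y hy
  exact he (hx _ hsat _ (Set.mem_insert _ _) _ (Set.mem_insert_of_mem _ rfl)
    (fun v hv => congrArg e (hkey v hv)) x (Finset.mem_singleton_self x))

lemma keyVars_subset_keycl (hF : F ∈ q) : ↑F.keyVars ⊆ keycl F q := by
  intro v hv
  refine ⟨allVars_subset_qVars hF (F.keyVars_subset_allVars hv), fun N _ t₁ _ t₂ _ hag y hy => ?_⟩
  rw [Finset.mem_singleton.mp hy]
  exact hag v hv

lemma attacksVar_of_mem_notkeyVars {v : Var} (hv : v ∈ F.notkeyVars) (hvk : v ∉ keycl F q) :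
    AttacksVar q F v :=
  ⟨[v], by simpa using hvk, ⟨v, rfl, hv⟩, rfl, List.isChain_singleton v⟩

lemma AttacksVar.of_adj {G : DBAtom} {w u : Var} (h : AttacksVar q F w) (hG : G ∈ q)
    (hw : w ∈ G.allVars) (hu : u ∈ G.allVars) (huk : u ∉ keycl F q) : AttacksVar q F u := by
  obtain ⟨l, hlk, ⟨a, ha, haF⟩, hlast, hl⟩ := h
  refine ⟨l ++ [u], ?_, ⟨a, ?_, haF⟩, List.getLast?_concat, ?_⟩
  · simpa [or_imp, forall_and] using ⟨hlk, huk⟩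
  · cases l with
    | nil => simp at ha
    | cons b l => simpa using ha
  · refine List.isChain_append.mpr ⟨hl, List.isChain_singleton u, ?_⟩
    rw [hlast]
    intro x hx y hy
    simp only [Option.mem_def, Option.some.injEq, List.head?_cons] at hx hy
    subst hx hy
    exact ⟨G, hG, hw, hu⟩

end Attacks

/-- The glued valuation is `μ` on the variables attacked by `F` or in `keycl(F, q)` and `ν`
elsewhere. An atom other than `F` with an attacked variable has all its variables of the first
kind (attacks propagate along atoms), so it is mapped as by `μ`; any other atom is mapped as
by `ν`, since `μ` and `ν` agree on `keycl(F, q)`. -/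
theorem exists_isEmbedding_eq_of_not_attacksVar {q : List DBAtom} {F : DBAtom} (hF : F ∈ q)
    {r : Finset DBFact} (hr : DBConsistent r) {μ ν : Assignment} (hμ : IsEmbedding q r μ)
    (hνdom : ν.Dom = ↑(qVars q)) (hν : ∀ G ∈ q.erase F, AtomIn r (applyAtom ν G))
    (hkey : ∀ v ∈ F.keyVars, μ v = ν v) :
    ∃ σ, IsEmbedding q r σ ∧ ∀ v, ¬ AttacksVar q F v → σ v = ν v := by
  have hkeycl := hr.eqOn_keycl (fun G hG => hμ.2 G (List.mem_of_mem_erase hG)) hν hkey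
  let P : Var → Prop := fun v => AttacksVar q F v ∨ v ∈ keycl F q
  let σ : Assignment := fun v => if P v then μ v else ν v
  have hσμ : ∀ G : DBAtom, (∀ v ∈ G.allVars, P v) → applyAtom σ G = applyAtom μ G :=
    fun G h => applyAtom_congr fun v hv => if_pos (h v hv)
  have hσν : ∀ v, ¬ AttacksVar q F v → σ v = ν v := by
    intro v hv
    by_cases hk : v ∈ keycl F q
    · simp only [σ, P, hk, or_true, if_true, hkeycl v hk]
    · simp only [σ, P, hv, hk, or_self, if_false]
  refine ⟨σ, ⟨?_, fun G hG => ?_⟩, hσν⟩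
  · ext v
    change (if P v then μ v else ν v) ≠ none ↔ v ∈ (qVars q : Set Var)
    split_ifs
    · exact Set.ext_iff.mp hμ.1 v
    · exact Set.ext_iff.mp hνdom v
  by_cases hGμ : G = F ∨ ∃ w ∈ G.allVars, AttacksVar q F w
  · rw [hσμ G ?_]
    · exact hμ.2 G hG
    intro v hv
    by_contra hP
    obtain ⟨hvA, hvk⟩ := not_or.mp hP
    rcases hGμ with rfl | ⟨w, hw, hwA⟩
    · have hvkey : v ∉ G.keyVars := fun h => hvk (keyVars_subset_keycl hG h)
      exact hvA (attacksVar_of_mem_notkeyVars (Finset.mem_sdiff.mpr ⟨hv, hvkey⟩) hvk)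
    · exact hvA (hwA.of_adj hG hw hv hvk)
  · obtain ⟨hGF, hGA⟩ := not_or.mp hGμ
    simp only [not_exists, not_and] at hGA
    rw [applyAtom_congr fun v hv => hσν v (hGA v hv)]
    exact hν G ((List.mem_erase_of_ne hGF).mpr hG)

lemma SelfJoinFree.eq_of_rel_eq {q : List DBAtom} (hq : SelfJoinFree q) {F G : DBAtom}
    (hG : G ∈ q) (hF : F ∈ q) (h : G.rel = F.rel) : G = F :=
  List.inj_on_of_nodup_map hq hG hF h

theorem rifi_insert_erase_subset {q : List DBAtom} (hsjf : SelfJoinFree q) {V : Finset Var}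
    (hunatt : ∀ v ∈ V, ∀ F ∈ q, ¬ AttacksVar q F v) {r : Finset DBFact} (hr : DBConsistent r)
    {μ : Assignment} (hμ : IsEmbedding q r μ) {F : DBAtom} (hF : F ∈ q) {f g : DBFact}
    (hμF : (applyAtom μ F).toFact? = some f) (hfg : KeyEqual f g) :
    rifi q (insert g (r.erase f)) V ⊆ rifi q r V := by
  rintro θ ⟨hθ, ν, hνdom, hνθ, hν⟩
  rw [DBAtom.toFact?_eq_some_iff] at hμF
  have hνr : ∀ G ∈ q.erase F, AtomIn r (applyAtom ν G) := by
    intro G hG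
    obtain ⟨h, hh, hνh⟩ := hν G (List.mem_of_mem_erase hG)
    refine ⟨h, (Finset.mem_insert.mp hh).elim (fun hhg => ?_) Finset.mem_of_mem_erase, hνh⟩
    have hGF : G ≠ F := ((List.Nodup.of_map _ hsjf).mem_erase_iff.mp hG).1
    refine absurd (hsjf.eq_of_rel_eq (List.mem_of_mem_erase hG) hF ?_) hGF
    rw [DBAtom.toFact?_eq_some_iff] at hνh
    calc G.rel = h.rel := congrArg DBAtom.rel hνh
      _ = f.rel := hhg ▸ hfg.1.symm
      _ = F.rel := (congrArg DBAtom.rel hμF).symm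
  obtain ⟨h, hh, hνh⟩ := hν F hF
  by_cases hhg : h = g
  · subst hhg
    have hkey := eqOn_keyVars_of_keyEqual hμF (DBAtom.toFact?_eq_some_iff.mp hνh) hfg
    obtain ⟨σ, hσ, hσν⟩ := exists_isEmbedding_eq_of_not_attacksVar hF hr hμ hνdom hνr hkey
    refine ⟨hθ, σ, hσ.1, fun v c hv => ?_, hσ.2⟩
    have hvV : v ∈ V := by
      have hvθ : v ∈ θ.Dom := by simp [Assignment.Dom, hv]
      rwa [hθ] at hvθ
    rw [hσν v (hunatt v hvV F hF)]
    exact hνθ v c hv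
  · refine ⟨hθ, ν, hνdom, hνθ, fun G hG => ?_⟩
    by_cases hGF : G = F
    · subst hGF
      exact ⟨h, Finset.mem_of_mem_erase ((Finset.mem_insert.mp hh).resolve_left hhg), hνh⟩
    · exact hνr G ((List.mem_erase_of_ne hGF).mpr hG)

section Repairs

variable {db r s : Finset DBFact} {f g : DBFact}

lemma KeyEqual.symm (h : KeyEqual f g) : KeyEqual g f := ⟨h.1.symm, h.2.symm⟩

lemma KeyEqual.trans {h : DBFact} (hfg : KeyEqual f g) (hgh : KeyEqual g h) : KeyEqual f h :=
  ⟨hfg.1.trans hgh.1, hfg.2.trans hgh.2⟩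

lemma isRepair_iff_maximal : IsRepair db r ↔ Maximal (fun s => s ⊆ db ∧ DBConsistent s) r :=
  ⟨fun ⟨hdb, hr, hmax⟩ => ⟨⟨hdb, hr⟩, fun t ht hrt => (hmax t hrt ht.1 ht.2).le⟩,
    fun ⟨⟨hdb, hr⟩, hmax⟩ => ⟨hdb, hr, fun _ hrs hs hsc => (hmax ⟨hs, hsc⟩ hrs).antisymm hrs⟩⟩

lemma exists_isRepair (db : Finset DBFact) : ∃ r, IsRepair db r := by
  have hfin : {s : Finset DBFact | s ⊆ db ∧ DBConsistent s}.Finite :=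
    db.powerset.finite_toSet.subset fun _ ht => Finset.mem_powerset.mpr ht.1
  obtain ⟨r, -, hr⟩ := hfin.exists_le_maximal (a := ∅)
    ⟨Finset.empty_subset db, fun f hf => absurd hf (Finset.notMem_empty f)⟩
  exact ⟨r, isRepair_iff_maximal.mpr hr⟩

lemma finite_setOf_isRepair (db : Finset DBFact) : {r | IsRepair db r}.Finite :=
  db.powerset.finite_toSet.subset fun _ hr => Finset.mem_powerset.mpr hr.1

lemma IsRepair.exists_keyEqual (hs : IsRepair db s) (hf : f ∈ db) : ∃ g ∈ s, KeyEqual f g := by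
  by_contra! hno
  have hcons : DBConsistent (insert f s) := by
    intro a ha b hb hab
    rcases Finset.mem_insert.mp ha with rfl | has <;> rcases Finset.mem_insert.mp hb with rfl | hbs
    · rfl
    · exact absurd hab (hno b hbs)
    · exact absurd hab.symm (hno a has)
    · exact hs.2.1 a has b hbs hab
  have hfs : f ∈ s :=
    hs.2.2 _ (Finset.subset_insert f s) (Finset.insert_subset hf hs.1) hcons ▸
      Finset.mem_insert_self f s
  exact hno f hfs ⟨rfl, rfl⟩

lemma IsRepair.insert_erase (hr : IsRepair db r) (hf : f ∈ r) (hg : g ∈ db) (hfg : KeyEqual f g) :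
    IsRepair db (insert g (r.erase f)) := by
  have hne : ∀ a ∈ r, KeyEqual a g → a = f := fun a ha hag => hr.2.1 a ha f hf (hag.trans hfg.symm)
  refine ⟨Finset.insert_subset hg ((Finset.erase_subset f r).trans hr.1), ?_, ?_⟩
  · intro a ha b hb hab
    rcases Finset.mem_insert.mp ha with rfl | har <;> rcases Finset.mem_insert.mp hb with rfl | hbr
    · rfl
    · exact absurd (hne b (Finset.mem_of_mem_erase hbr) hab.symm) (Finset.ne_of_mem_erase hbr)
    · exact absurd (hne a (Finset.mem_of_mem_erase har) hab) (Finset.ne_of_mem_erase har)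
    · exact hr.2.1 a (Finset.mem_of_mem_erase har) b (Finset.mem_of_mem_erase hbr) hab
  · intro s hts hs hsc
    refine hts.antisymm' fun h hh => ?_
    obtain ⟨g', hg', hhg'⟩ := hr.exists_keyEqual (hs hh)
    by_cases hg'f : g' = f
    · subst hg'f
      rw [hsc h hh g (hts (Finset.mem_insert_self g _)) (hhg'.trans hfg)]
      exact Finset.mem_insert_self g _
    · have hg't : g' ∈ insert g (r.erase f) :=
        Finset.mem_insert_of_mem (Finset.mem_erase.mpr ⟨hg'f, hg'⟩)
      rwa [hsc h hh g' (hts hg't) hhg']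

end Repairs

lemma Finset.sdiff_insert_erase_ssubset {α : Type*} [DecidableEq α] {s r : Finset α} {f g : α}
    (hf : f ∉ s) (hg : g ∈ s) (hgr : g ∉ r) : s \ insert g (r.erase f) ⊂ s \ r := by
  refine (Finset.ssubset_iff_of_subset fun x hx => ?_).mpr ⟨g, by simp [hg, hgr], by simp⟩
  simp only [Finset.mem_sdiff, Finset.mem_insert, Finset.mem_erase, not_or, not_and] at hx ⊢
  exact ⟨hx.1, fun hxr => hx.2.2 (fun hxf => hf (hxf ▸ hx.1)) hxr⟩

theorem rifi_subset_of_minimalFor {q : List DBAtom} (hsjf : SelfJoinFree q) {db : Finset DBFact}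
    {V : Finset Var} (hunatt : ∀ v ∈ V, ∀ F ∈ q, ¬ AttacksVar q F v) {s : Finset DBFact}
    (hs : IsRepair db s) (r : Finset DBFact) (hr : MinimalFor (IsRepair db) (rifi q · V) r) :
    rifi q r V ⊆ rifi q s V := by
  induction hn : (s \ r).card using Nat.strong_induction_on generalizing r with
  | _ n ih =>
    by_cases hout : ∃ μ, IsEmbedding q r μ ∧ ∃ F ∈ q, ∃ f ∈ r, f ∉ s ∧
        (applyAtom μ F).toFact? = some f
    · obtain ⟨μ, hμ, F, hF, f, hfr, hfs, hμF⟩ := hout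
      obtain ⟨g, hgs, hfg⟩ := hs.exists_keyEqual (hr.1.1 hfr)
      have hgr : g ∉ r := fun hgr => hfs (hr.1.2.1 g hgr f hfr hfg.symm ▸ hgs)
      have ht := hr.1.insert_erase hfr (hs.1 hgs) hfg
      have hsub := rifi_insert_erase_subset hsjf hunatt hr.1.2.1 hμ hF hμF hfg
      have hmin : MinimalFor (IsRepair db) (rifi q · V) (insert g (r.erase f)) :=
        ⟨ht, fun j hj hle => hsub.trans (hr.2 hj (hle.trans hsub))⟩
      have hlt := Finset.card_lt_card (Finset.sdiff_insert_erase_ssubset hfs hgs hgr)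
      exact (hr.2 ht hsub).trans (ih _ (hn ▸ hlt) _ hmin rfl)
    · rintro θ ⟨hθ, ν, hνdom, hνθ, hν⟩
      refine ⟨hθ, ν, hνdom, hνθ, fun G hG => ?_⟩
      obtain ⟨h, hh, hνh⟩ := hν G hG
      by_cases hhs : h ∈ s
      · exact ⟨h, hhs, hνh⟩
      · exact absurd ⟨ν, ⟨hνdom, hν⟩, G, hG, h, hh, hhs, hνh⟩ hout

theorem stmt2_general
    (q : List DBAtom) (hsjf : SelfJoinFree q)
    (db : Finset DBFact)
    (V : Finset Var)
    (hunatt : ∀ v ∈ V, ∀ F ∈ q, ¬ AttacksVar q F v) :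
    ∃ r : Finset DBFact, IsRepair db r ∧
      rifi q r V = ⋂ (s : Finset DBFact) (_ : IsRepair db s), rifi q s V := by
  obtain ⟨r, hr⟩ := (finite_setOf_isRepair db).exists_minimalFor (rifi q · V) _ (exists_isRepair db)
  refine ⟨r, hr.1, (Set.subset_iInter₂ fun s hs => ?_).antisymm (Set.iInter₂_subset r hr.1)⟩
  exact rifi_subset_of_minimalFor hsjf hunatt hs r hr

/-- If no variable of V is attacked in q, some repair realizes the
intersection of rifi over all repairs. -/
theorem stmt2
    (q : List DBAtom) (hsjf : SelfJoinFree q)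
    (db : Finset DBFact)
    (V : Finset Var) (hV : V.Nonempty) (hVsub : V ⊆ qVars q)
    (hunatt : ∀ v ∈ V, ∀ F ∈ q, ¬ AttacksVar q F v) :
    ∃ r : Finset DBFact, IsRepair db r ∧
      rifi q r V = ⋂ (s : Finset DBFact) (_ : IsRepair db s), rifi q s V :=
  stmt2_general q hsjf db V hunatt
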